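/- For every tree T on n vertices, the number of dependent (non-independent) vertex subsets of even size differs from the number of dependent subsets of odd size by at most one. -/

import Mathlib

/-!
Weighting each subset `s` by `(-1) ^ #s`, the difference in question is the signed count of
dependent sets, and since the signed count of all subsets of a nonempty set vanishes, this is minus
the independence polynomial `I` of the forest evaluated at `-1`. Deleting a vertex `u` of `A` gives
`I(A) = I(A - u) - I(A - N[u])`, so an isolated vertex forces `I(A) = 0`; and if `v` is a leaf of
`A` with neighbour `u`, then `v` is isolated in `A - u`, whence `I(A) = -I(A - N[u])`. As every
nonempty forest has an isolated vertex or a leaf, induction gives `I(A) ∈ {-1, 0, 1}`.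
-/

open Finset

theorem Finset.card_filter_even_sub_card_filter_odd {ι : Type*} (s : Finset ι) (f : ι → ℕ) :
    (#{i ∈ s | Even (f i)} - #{i ∈ s | Odd (f i)} : ℤ) = ∑ i ∈ s, (-1) ^ f i := by
  simp [neg_one_pow_eq_ite, sum_ite, Nat.not_even_iff_odd, sub_eq_add_neg]

namespace SimpleGraph

variable {V : Type*} {G : SimpleGraph V}

theorem IsAcyclic.exists_neighborSet_subsingleton [Finite V] [Nonempty V] (hG : G.IsAcyclic) :
    ∃ v, (G.neighborSet v).Subsingleton := by
  obtain ⟨u, v, p, hp, hlongest⟩ := Walk.exists_isPath_forall_isPath_length_le_length G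
  refine ⟨u, fun x hx y hy => ?_⟩
  have mem_support {w} (hw : G.Adj u w) : w ∈ p.support := by
    by_contra hw'
    simpa using hlongest _ _ (p.cons hw.symm) (hp.cons hw')
  rw [hG.eq_snd_of_adj_start hp hx (mem_support hx), hG.eq_snd_of_adj_start hp hy (mem_support hy)]

theorem IsAcyclic.exists_mem_subsingleton_neighborSet_inter (hG : G.IsAcyclic) {A : Finset V}
    (hA : A.Nonempty) : ∃ v ∈ A, (G.neighborSet v ∩ A).Subsingleton := by
  have : Nonempty A := hA.to_subtype
  obtain ⟨⟨v, hv⟩, hsub⟩ := (hG.induce A).exists_neighborSet_subsingleton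
  refine ⟨v, hv, fun x ⟨hvx, hx⟩ y ⟨hvy, hy⟩ => ?_⟩
  exact congrArg Subtype.val (@hsub ⟨x, hx⟩ hvx ⟨y, hy⟩ hvy)

section SignedIndepCount

variable (G) [DecidableRel G.Adj]

/-- The independence polynomial of `G.induce A` evaluated at `-1`. -/
def signedIndepCount (A : Finset V) : ℤ :=
  ∑ s ∈ A.powerset with ∀ a ∈ s, ∀ b ∈ s, ¬ G.Adj a b, (-1) ^ #s

@[simp]
theorem signedIndepCount_empty : G.signedIndepCount ∅ = 1 := by
  simp [signedIndepCount, filter_singleton]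

variable {G} [DecidableEq V]

theorem signedIndepCount_insert {u : V} {A : Finset V} (hu : u ∉ A) :
    G.signedIndepCount (insert u A) =
      G.signedIndepCount A - G.signedIndepCount {x ∈ A | ¬ G.Adj u x} := by
  have indep_insert (t : Finset V) :
      (∀ a ∈ insert u t, ∀ b ∈ insert u t, ¬ G.Adj a b) ↔
        (∀ x ∈ t, ¬ G.Adj u x) ∧ ∀ a ∈ t, ∀ b ∈ t, ¬ G.Adj a b := by
    simp only [mem_insert, forall_eq_or_imp, G.loopless.irrefl, not_false_eq_true, true_and]
    exact ⟨fun ⟨hu, h⟩ => ⟨hu, fun a ha => (h a ha).2⟩,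
      fun ⟨hu, h⟩ => ⟨hu, fun a ha => ⟨fun hau => hu a ha hau.symm, h a ha⟩⟩⟩
  set B : Finset V := {x ∈ A | ¬ G.Adj u x}
  rw [signedIndepCount, sum_filter, sum_powerset_insert hu, ← sum_filter, ← signedIndepCount,
    sub_eq_add_neg]
  congr 1
  rw [← sum_subset (powerset_mono.2 (filter_subset _ A) : B.powerset ⊆ A.powerset)]
  · rw [signedIndepCount, sum_filter, ← sum_neg_distrib]
    refine sum_congr rfl fun t ht => ?_
    have htB : t ⊆ B := mem_powerset.1 ht
    have hnbr : ∀ x ∈ t, ¬ G.Adj u x := fun x hx => (mem_filter.1 (htB hx)).2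
    have hut : u ∉ t := fun h => hu (mem_filter.1 (htB h)).1
    simp only [indep_insert, and_iff_right hnbr, card_insert_of_notMem hut, pow_succ]
    split_ifs <;> ring
  · intro t htA htB
    refine if_neg fun h => htB (mem_powerset.2 fun x hx => ?_)
    exact mem_filter.2 ⟨mem_powerset.1 htA hx, ((indep_insert t).1 h).1 x hx⟩

theorem signedIndepCount_insert_of_forall_not_adj {u : V} {A : Finset V} (hu : u ∉ A)
    (hiso : ∀ x ∈ A, ¬ G.Adj u x) : G.signedIndepCount (insert u A) = 0 := by
  rw [signedIndepCount_insert hu, filter_true_of_mem hiso, sub_self]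

theorem IsAcyclic.abs_signedIndepCount_le_one (hG : G.IsAcyclic) (A : Finset V) :
    |G.signedIndepCount A| ≤ 1 := by
  induction A using Finset.strongInduction with
  | H A ih =>
    obtain rfl | hA := A.eq_empty_or_nonempty
    · simp
    obtain ⟨v, hv, hleaf⟩ := hG.exists_mem_subsingleton_neighborSet_inter hA
    by_cases hnbr : ∃ u ∈ A, G.Adj v u
    · obtain ⟨u, hu, hvu⟩ := hnbr
      have hdel : G.signedIndepCount (A.erase u) = 0 := by
        rw [← insert_erase (mem_erase.2 ⟨hvu.ne, hv⟩)]
        refine signedIndepCount_insert_of_forall_not_adj (notMem_erase v _) fun x hx hvx => ?_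
        have hxu := mem_of_mem_erase hx
        exact ne_of_mem_erase hxu (hleaf ⟨hvx, mem_of_mem_erase hxu⟩ ⟨hvu, hu⟩)
      rw [← insert_erase hu, signedIndepCount_insert (notMem_erase u A), hdel, zero_sub, abs_neg]
      exact ih _ ((filter_subset _ _).trans_ssubset (erase_ssubset hu))
    · push Not at hnbr
      rw [← insert_erase hv, signedIndepCount_insert_of_forall_not_adj (notMem_erase v A)
        fun x hx => hnbr x (mem_of_mem_erase hx)]
      simp

theorem IsAcyclic.abs_sum_powerset_filter_not_indep_le_one (hG : G.IsAcyclic) (A : Finset V) :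
    |∑ s ∈ A.powerset with ¬ ∀ a ∈ s, ∀ b ∈ s, ¬ G.Adj a b, (-1 : ℤ) ^ #s| ≤ 1 := by
  have hsplit := sum_filter_add_sum_filter_not A.powerset (fun s => ∀ a ∈ s, ∀ b ∈ s, ¬ G.Adj a b)
    fun s => (-1 : ℤ) ^ #s
  rw [sum_powerset_neg_one_pow_card, ← signedIndepCount] at hsplit
  obtain rfl | hA := A.eq_empty_or_nonempty
  · rw [if_pos rfl, signedIndepCount_empty, add_eq_left] at hsplit
    rw [hsplit, abs_zero]
    exact zero_le_one
  · rw [if_neg hA.ne_empty] at hsplit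
    rw [eq_neg_of_add_eq_zero_right hsplit, abs_neg]
    exact hG.abs_signedIndepCount_le_one A

end SignedIndepCount

end SimpleGraph

open Classical in
theorem tree_dependent_sets_balance_general {V : Type*} [Fintype V] (T : SimpleGraph V)
    (hacyc : T.IsAcyclic) :
    |((Finset.univ.filter fun s : Finset V =>
          ¬(∀ u ∈ s, ∀ v ∈ s, ¬ T.Adj u v) ∧ Even s.card).card : ℤ) -
      ((Finset.univ.filter fun s : Finset V =>
          ¬(∀ u ∈ s, ∀ v ∈ s, ¬ T.Adj u v) ∧ Odd s.card).card : ℤ)| ≤ 1 := by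
  rw [← filter_filter, ← filter_filter, card_filter_even_sub_card_filter_odd, ← powerset_univ]
  convert hacyc.abs_sum_powerset_filter_not_indep_le_one univ

open Classical in
theorem tree_dependent_sets_balance {V : Type*} [Fintype V] (T : SimpleGraph V)
    (hconn : T.Connected) (hacyc : T.IsAcyclic) :
    |((Finset.univ.filter fun s : Finset V =>
          ¬(∀ u ∈ s, ∀ v ∈ s, ¬ T.Adj u v) ∧ Even s.card).card : ℤ) -
      ((Finset.univ.filter fun s : Finset V =>
          ¬(∀ u ∈ s, ∀ v ∈ s, ¬ T.Adj u v) ∧ Odd s.card).card : ℤ)| ≤ 1 :=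
  tree_dependent_sets_balance_general T hacyc
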